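/- With g as above, the diagonal entries of the Jacobian are J_{j,j}(α) = ∫_{m_{j-1}}^{m_j} f(x) dx − f(m_{j-1})·(a_j − a_{j-1})/4 − f(m_j)·(a_{j+1} − a_j)/4 for 2 ≤ j ≤ n−1, with the boundary conventions that the terms involving m₀ = -∞ and mₙ = ∞ vanish. -/

import Mathlib

open MeasureTheory

/-- The Voronoi interval of the `j`-th point of `v : Fin n → ℝ` (for sorted `v`):
`(m_{j-1}, m_j]` with midpoints `m_j = (v j + v (j+1))/2`, `m₀ = -∞`, `mₙ = ∞`. -/
def voronoiCell (n : ℕ) (v : Fin n → ℝ) (j : Fin n) : Set ℝ :=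
  {x | (∀ j' : Fin n, (j' : ℕ) + 1 = (j : ℕ) → (v j' + v j) / 2 < x) ∧
       (∀ j' : Fin n, (j : ℕ) + 1 = (j' : ℕ) → x ≤ (v j + v j') / 2)}

/-- The nonlinear map `g` whose roots are the self-consistent sets:
`g_j(v) = v_j ∫_{m_{j-1}}^{m_j} f − ∫_{m_{j-1}}^{m_j} x f`. -/
noncomputable def gfun (n : ℕ) (f : ℝ → ℝ) (v : Fin n → ℝ) (j : Fin n) : ℝ :=
  v j * (∫ x in voronoiCell n v j, f x) - ∫ x in voronoiCell n v j, x * f x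

/-! Near a strictly increasing `v` the cell of an interior index `j` is `(m_{j-1}(w), m_j(w)]`
with endpoints linear in `w`, so `g_j` is differentiable by the product rule and the fundamental
theorem of calculus at both endpoints. Moving `a_j` moves each adjacent midpoint `m` at speed
`1/2`, and the resulting boundary contribution `±(a_j - m) f(m) / 2` is
`-f(m) |a_j - a_{j±1}| / 4`. -/

open Set

theorem hasFDerivAt_setIntegral_Ioc {E F : Type*} [NormedAddCommGroup E] [NormedSpace ℝ E]
    [NormedAddCommGroup F] [NormedSpace ℝ F] [CompleteSpace F] {f : ℝ → F} (hf : Continuous f)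
    {a b : E → ℝ} {a' b' : E →L[ℝ] ℝ} {v : E} (ha : HasFDerivAt a a' v)
    (hb : HasFDerivAt b b' v) (hab : a v < b v) :
    HasFDerivAt (fun w => ∫ x in Ioc (a w) (b w), f x)
      (b'.smulRight (f (b v)) - a'.smulRight (f (a v))) v := by
  have hFTC := (intervalIntegral.integral_hasStrictFDerivAt (hf.intervalIntegrable _ _)
    (hf.stronglyMeasurableAtFilter _ _) (hf.stronglyMeasurableAtFilter _ _) hf.continuousAt
    hf.continuousAt).hasFDerivAt.comp v (ha.prodMk hb)
  have hle : ∀ᶠ w in nhds v, a w ≤ b w :=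
    (ha.continuousAt.eventually_lt hb.continuousAt hab).mono fun _ h => h.le
  refine (hFTC.congr_of_eventuallyEq ?_).congr_fderiv ?_
  · filter_upwards [hle] with w hw
    exact (intervalIntegral.integral_of_le hw).symm
  · ext; simp

theorem hasFDerivAt_midpoint_apply {ι : Type*} (v : ι → ℝ) (i k : ι) :
    HasFDerivAt (fun w : ι → ℝ => (w i + w k) / 2)
      ((2 : ℝ)⁻¹ • (ContinuousLinearMap.proj (R := ℝ) (φ := fun _ => ℝ) i +
        ContinuousLinearMap.proj (φ := fun _ => ℝ) k)) v :=
  (ContinuousLinearMap.hasFDerivAt _).congr_of_eventuallyEq <| .of_forall fun w => by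
      simp [div_eq_inv_mul, mul_add]

theorem voronoiCell_eq_Ioc {n : ℕ} (w : Fin n → ℝ) {jp j js : Fin n}
    (hjp : (jp : ℕ) + 1 = j) (hjs : (j : ℕ) + 1 = js) :
    voronoiCell n w j = Ioc ((w jp + w j) / 2) ((w j + w js) / 2) := by
  ext x
  refine ⟨fun ⟨hleft, hright⟩ => ⟨hleft jp hjp, hright js hjs⟩,
    fun ⟨hleft, hright⟩ => ⟨?_, ?_⟩⟩
  · intro j' hj'
    rwa [show j' = jp by omega]
  · intro j' hj'
    rwa [show j' = js by omega]

theorem gfun_jacobian_diagonal_general (n : ℕ) (f : ℝ → ℝ) (hf : Continuous f)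
    (v : Fin n → ℝ) (hv : StrictMono v) :
    ∀ jp j js : Fin n, (jp : ℕ) + 1 = (j : ℕ) → (j : ℕ) + 1 = (js : ℕ) →
      fderiv ℝ (fun w => gfun n f w j) v (Pi.single j 1)
        = (∫ x in voronoiCell n v j, f x)
          - f ((v jp + v j) / 2) * (v j - v jp) / 4
          - f ((v j + v js) / 2) * (v js - v j) / 4 := by
  intro jp j js hjp hjs
  have hord : (v jp + v j) / 2 < (v j + v js) / 2 := by
    have := hv (show jp < js by rw [Fin.lt_def]; omega)
    linarith
  have hl := hasFDerivAt_midpoint_apply v jp j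
  have hr := hasFDerivAt_midpoint_apply v j js
  have hg : HasFDerivAt (fun w => gfun n f w j) _ v :=
    (((hasFDerivAt_apply j v).mul (hasFDerivAt_setIntegral_Ioc hf hl hr hord)).sub
      (hasFDerivAt_setIntegral_Ioc (continuous_id.mul hf) hl hr hord)).congr_of_eventuallyEq
      (.of_forall fun w => by simp only [gfun, voronoiCell_eq_Ioc w hjp hjs]; rfl)
  have hjpj : jp ≠ j := fun h => by subst h; omega
  have hjsj : js ≠ j := fun h => by subst h; omega
  rw [hg.fderiv, voronoiCell_eq_Ioc _ hjp hjs]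
  simp only [smul_add, Pi.mul_apply, id_eq, sub_apply, add_apply, smul_apply,
    ContinuousLinearMap.smulRight_apply, ContinuousLinearMap.proj_apply, Pi.single_eq_same,
    smul_eq_mul, mul_one, Pi.single_eq_of_ne hjsj, mul_zero, add_zero, Pi.single_eq_of_ne hjpj,
    zero_add]
  ring

/-- The interior diagonal entries of the Jacobian of `g`:
`J_{j,j} = ∫_{m_{j-1}}^{m_j} f − f(m_{j-1})(a_j−a_{j-1})/4 − f(m_j)(a_{j+1}−a_j)/4`. -/
theorem gfun_jacobian_diagonal (n : ℕ) (f : ℝ → ℝ) (hf : Continuous f)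
    (hf0 : ∀ x, 0 ≤ f x) (hf1 : ∫ x, f x = 1)
    (hmom : Integrable (fun x => x * f x))
    (hdecay0 : Filter.Tendsto f (Filter.cocompact ℝ) (nhds 0))
    (hdecay1 : Filter.Tendsto (fun x => x * f x) (Filter.cocompact ℝ) (nhds 0))
    (v : Fin n → ℝ) (hv : StrictMono v) :
    ∀ jp j js : Fin n, (jp : ℕ) + 1 = (j : ℕ) → (j : ℕ) + 1 = (js : ℕ) →
      fderiv ℝ (fun w => gfun n f w j) v (Pi.single j 1)
        = (∫ x in voronoiCell n v j, f x)
          - f ((v jp + v j) / 2) * (v j - v jp) / 4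
          - f ((v j + v js) / 2) * (v js - v j) / 4 :=
  gfun_jacobian_diagonal_general n f hf v hv
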